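/- Let a mesh of [0,1] be given and let (w_i)_{0 ≤ i ≤ I+1} ∈ ℝ^{I+2}. Then for every i with 1 ≤ i ≤ I, w_i² ≤ 2 ( Σ_{j=0}^{I} (w_{j+1} − w_j)²/h_{j+1/2} + w_0² + w_{I+1}² ), i.e. w_i² ≤ 2 ‖w_h‖_{1,T}². -/

import Mathlib

open MeasureTheory Real Filter Topology

noncomputable section

namespace Corrosion

/-- The Bernoulli function `B(x) = x / (e^x - 1)`, `B(0) = 1`. -/
def Bern (x : ℝ) : ℝ := if x = 0 then 1 else x / (Real.exp x - 1)

/-- The two species: cations `P` and electrons `N`. -/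
inductive Sp | P | N

/-- charge numbers: `z_P = 3`, `z_N = -1`. -/
def z : Sp → ℝ
  | Sp.P => 3
  | Sp.N => -1

/-- A mesh of `[0,1]`: edge points `xe 0 = x_{1/2} = 0 < xe 1 = x_{3/2} < … < xe I = x_{I+1/2} = 1`. -/
structure Mesh where
  I : ℕ
  hI : 1 ≤ I
  xe : ℕ → ℝ
  xe0 : xe 0 = 0
  xeI : xe I = 1
  mono : ∀ j, j < I → xe j < xe (j + 1)

namespace Mesh

variable (m : Mesh)

/-- cell centers `x_i` for `1 ≤ i ≤ I` , with `x_0 = 0` and `x_{I+1} = 1`. -/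
def xc (i : ℕ) : ℝ :=
  if i = 0 then 0 else if i = m.I + 1 then 1 else (m.xe (i - 1) + m.xe i) / 2

/-- `h_i = x_{i+1/2} - x_{i-1/2}` for `1 ≤ i ≤ I`. -/
def h (i : ℕ) : ℝ := m.xe i - m.xe (i - 1)

/-- `h_{i+1/2} = x_{i+1} - x_i` for `0 ≤ i ≤ I`. -/
def hp (i : ℕ) : ℝ := m.xc (i + 1) - m.xc i

/-- mesh size `h = max_{1 ≤ i ≤ I} h_i`. -/
def size : ℝ := (Finset.Icc 1 m.I).sup' ⟨1, Finset.mem_Icc.mpr ⟨le_refl 1, m.hI⟩⟩ m.h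

/-- piecewise constant function associated to a vector `(w_i)_{0 ≤ i ≤ I+1}`:
equal to `w i` on `(x_{i-1/2}, x_{i+1/2})`, to `w 0` at `x = 0`, to `w (I+1)` at `x = 1`. -/
def pw (w : ℕ → ℝ) (x : ℝ) : ℝ :=
  if x = 0 then w 0 else if x = 1 then w (m.I + 1) else w (sInf {i : ℕ | x < m.xe i})

/-- square of the discrete `H¹` norm `‖w_h‖_{1,T}`. -/
def norm1sq (w : ℕ → ℝ) : ℝ :=
  (∑ i ∈ Finset.range (m.I + 1), (w (i + 1) - w i) ^ 2 / m.hp i) + w 0 ^ 2 + w (m.I + 1) ^ 2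

/-- square of the discrete `L²` norm `‖w_h‖_0`. -/
def norm0sq (w : ℕ → ℝ) : ℝ := ∑ i ∈ Finset.Icc 1 m.I, m.h i * w i ^ 2

/-- the discrete dual norm `‖w_h‖_{-1,2,T}`. -/
def normDual (w : ℕ → ℝ) : ℝ :=
  sSup {r : ℝ | ∃ v : ℕ → ℝ, m.norm1sq v ≤ 1 ∧
    r = ∫ x in Set.Ioo (0:ℝ) 1, m.pw w x * m.pw v x}

/-- piecewise constant space derivative: on `(x_i, x_{i+1})` it equals `(w_{i+1} - w_i)/h_{i+1/2}`. -/
def dpw (w : ℕ → ℝ) (x : ℝ) : ℝ :=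
  (w (sInf {i : ℕ | x < m.xc (i + 1)} + 1) - w (sInf {i : ℕ | x < m.xc (i + 1)})) /
    m.hp (sInf {i : ℕ | x < m.xc (i + 1)})

end Mesh

/-- All the data of the corrosion model. -/
structure Data where
  lam : ℝ
  eps : ℝ
  alpha0 : ℝ
  alpha1 : ℝ
  V : ℝ
  rho : ℝ
  dPsi0 : ℝ
  dPsi1 : ℝ
  umax : Sp → ℝ
  m0 : Sp → ℝ
  k0 : Sp → ℝ
  m1 : Sp → ℝ
  k1 : Sp → ℝ
  a0 : Sp → ℝ
  b0 : Sp → ℝ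
  a1 : Sp → ℝ
  b1 : Sp → ℝ
  u0 : Sp → ℝ → ℝ
  lam_pos : 0 < lam
  umax_pos : ∀ u, 0 < umax u
  m0_pos : ∀ u, 0 < m0 u
  k0_pos : ∀ u, 0 < k0 u
  m1_pos : ∀ u, 0 < m1 u
  k1_pos : ∀ u, 0 < k1 u
  a0_mem : ∀ u, a0 u ∈ Set.Icc (0:ℝ) 1
  b0_mem : ∀ u, b0 u ∈ Set.Icc (0:ℝ) 1
  a1_mem : ∀ u, a1 u ∈ Set.Icc (0:ℝ) 1
  b1_mem : ∀ u, b1 u ∈ Set.Icc (0:ℝ) 1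
  u0_meas : ∀ u, Measurable (u0 u)

namespace Data
variable (d : Data)

/-- `ε_P = 1`, `ε_N = ε`. -/
def epsu : Sp → ℝ
  | Sp.P => 1
  | Sp.N => d.eps

def beta0 (u : Sp) (x : ℝ) : ℝ :=
  d.m0 u * Real.exp (-(z u) * d.b0 u * x) + d.k0 u * Real.exp (z u * d.a0 u * x)

def beta1 (u : Sp) (x : ℝ) : ℝ :=
  d.m1 u * Real.exp (-(z u) * d.b1 u * x) + d.k1 u * Real.exp (z u * d.a1 u * x)

def gamma0 (u : Sp) (x : ℝ) : ℝ := d.m0 u * d.umax u * Real.exp (-(z u) * d.b0 u * x)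

def gamma1 (u : Sp) (x : ℝ) : ℝ := d.k1 u * d.umax u * Real.exp (z u * d.a1 u * x)

/-- Hypotheses (H). -/
def HypH : Prop :=
  (3 * d.umax Sp.P - d.umax Sp.N + d.rho = 0) ∧
  (∀ u, ∀ᵐ x ∂(volume.restrict (Set.Ioo (0:ℝ) 1)), 0 ≤ d.u0 u x ∧ d.u0 u x ≤ d.umax u) ∧
  (-(1 / (3 * d.a0 Sp.P)) * (1 + Real.log (d.alpha0 * d.a0 Sp.P * d.k0 Sp.P)) ≤ d.dPsi0 ∧
    d.dPsi0 ≤ (1 / d.a0 Sp.N) * (1 + Real.log (d.alpha0 * d.a0 Sp.N * d.k0 Sp.N))) ∧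
  (-(1 / d.b1 Sp.N) * (1 + Real.log (d.alpha1 * d.b1 Sp.N * d.m1 Sp.N)) ≤ d.dPsi1 ∧
    d.dPsi1 ≤ (1 / (3 * d.b1 Sp.P)) * (1 + Real.log (d.alpha1 * d.b1 Sp.P * d.m1 Sp.P)))

end Data

/-- `dΨ_{i+1/2} = (Ψ_{i+1} - Ψ_i)/h_{i+1/2}`. -/
def dPsiF (m : Mesh) (Psi : ℕ → ℝ) (i : ℕ) : ℝ := (Psi (i + 1) - Psi i) / m.hp i

/-- the Scharfetter-Gummel numerical flux `F_{u,i+1/2}`. -/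
def Flux (m : Mesh) (d : Data) (u : Sp) (Psi w : ℕ → ℝ) (i : ℕ) : ℝ :=
  (Bern (z u * m.hp i * dPsiF m Psi i) * w i -
    Bern (-(z u) * m.hp i * dPsiF m Psi i) * w (i + 1)) / m.hp i

/-- The fully implicit scheme (S), with time step `Δt = T / K`.
`sol u k i` is `u_i^k` (for `u = P, N`) and `Psi k i` is `Ψ_i^k`. -/
def Scheme (m : Mesh) (d : Data) (T : ℝ) (K : ℕ)
    (sol : Sp → ℕ → ℕ → ℝ) (Psi : ℕ → ℕ → ℝ) : Prop :=
  (∀ u i, 1 ≤ i → i ≤ m.I →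
    sol u 0 i = (1 / m.h i) * ∫ x in Set.Ioo (m.xe (i - 1)) (m.xe i), d.u0 u x) ∧
  (∀ k, k < K → ∀ i, 1 ≤ i → i ≤ m.I →
    -(d.lam ^ 2) * (dPsiF m (Psi (k + 1)) i - dPsiF m (Psi (k + 1)) (i - 1)) =
      m.h i * (3 * sol Sp.P (k + 1) i - sol Sp.N (k + 1) i + d.rho)) ∧
  (∀ u k, k < K → ∀ i, 1 ≤ i → i ≤ m.I →
    d.epsu u * m.h i * (sol u (k + 1) i - sol u k i) / (T / K) +
      Flux m d u (Psi (k + 1)) (sol u (k + 1)) i -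
      Flux m d u (Psi (k + 1)) (sol u (k + 1)) (i - 1) = 0) ∧
  (∀ k, k < K → Psi (k + 1) 0 - d.alpha0 * dPsiF m (Psi (k + 1)) 0 = d.dPsi0) ∧
  (∀ k, k < K →
    Psi (k + 1) (m.I + 1) + d.alpha1 * dPsiF m (Psi (k + 1)) m.I = d.V - d.dPsi1) ∧
  (∀ u k, k < K →
    -(Flux m d u (Psi (k + 1)) (sol u (k + 1)) 0) =
      d.beta0 u (Psi (k + 1) 0) * sol u (k + 1) 0 - d.gamma0 u (Psi (k + 1) 0)) ∧
  (∀ u k, k < K →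
    Flux m d u (Psi (k + 1)) (sol u (k + 1)) m.I =
      d.beta1 u (d.V - Psi (k + 1) (m.I + 1)) * sol u (k + 1) (m.I + 1) -
      d.gamma1 u (d.V - Psi (k + 1) (m.I + 1)))

/-- The stability property `0 ≤ u_i^k ≤ u^max` for all `i, k`. -/
def Stable (m : Mesh) (d : Data) (K : ℕ) (sol : Sp → ℕ → ℕ → ℝ) : Prop :=
  ∀ u k, k ≤ K → ∀ i, i ≤ m.I + 1 → 0 ≤ sol u k i ∧ sol u k i ≤ d.umax u

/-- the approximate space-time solution `w_{h,Δt}`, equal to the piecewise constant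
function built on `w^{k+1}` for `t ∈ [t^k, t^{k+1})`, with `Δt = T/K`. -/
def apx (m : Mesh) (T : ℝ) (K : ℕ) (w : ℕ → ℕ → ℝ) (x t : ℝ) : ℝ :=
  m.pw (w (Nat.floor (t / (T / K)) + 1)) x

/-- the discrete space derivative `∂_{x,T} w_{h,Δt}`. -/
def dapx (m : Mesh) (T : ℝ) (K : ℕ) (w : ℕ → ℕ → ℝ) (x t : ℝ) : ℝ :=
  m.dpw (w (Nat.floor (t / (T / K)) + 1)) x


/-- hyperbolic cotangent `coth y = cosh y / sinh y`. -/
def coth (x : ℝ) : ℝ := Real.cosh x / Real.sinh x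

/-- approximate trace at `x = 0`: `t ∈ [t^k, t^{k+1}) ↦ w_0^{k+1}`. -/
def trace0 (T : ℝ) (K : ℕ) (w : ℕ → ℕ → ℝ) (t : ℝ) : ℝ :=
  w (Nat.floor (t / (T / K)) + 1) 0

/-- approximate trace at `x = 1`: `t ∈ [t^k, t^{k+1}) ↦ w_{I+1}^{k+1}`. -/
def trace1 (m : Mesh) (T : ℝ) (K : ℕ) (w : ℕ → ℕ → ℝ) (t : ℝ) : ℝ :=
  w (Nat.floor (t / (T / K)) + 1) (m.I + 1)

/-- the measure on `(0,1) × (0,T)` (space × time). -/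
def stMeasure (T : ℝ) : MeasureTheory.Measure (ℝ × ℝ) :=
  (MeasureTheory.volume.restrict (Set.Ioo (0:ℝ) 1)).prod
    (MeasureTheory.volume.restrict (Set.Ioo (0:ℝ) T))

end Corrosion

/-! Writing `w_i = w_0 + ∑_{j<i} (w_{j+1} - w_j)` and applying Cauchy–Schwarz with the weights
`h_{j+1/2}`, whose total over the mesh is `x_{I+1} - x_0 = 1`, bounds `(w_i - w_0)²` by the
difference part of `‖w_h‖²_{1,T}`; then `w_i² ≤ 2 w_0² + 2 (w_i - w_0)²`. -/

theorem sq_sub_le_sum_mul_sum_sq_sub_div {R : Type*} [Field R] [LinearOrder R]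
    [IsStrictOrderedRing R] {w p : ℕ → R} {n : ℕ} (hp : ∀ j < n, 0 < p j) :
    (w n - w 0) ^ 2 ≤ (∑ j ∈ Finset.range n, p j) *
      ∑ j ∈ Finset.range n, (w (j + 1) - w j) ^ 2 / p j := by
  rw [← Finset.sum_range_sub]
  refine Finset.sum_sq_le_sum_mul_sum_of_sq_le_mul _
    (fun j hj => (hp j (Finset.mem_range.1 hj)).le)
    (fun j hj => div_nonneg (sq_nonneg _) (hp j (Finset.mem_range.1 hj)).le)
    (fun j hj => ?_)
  rw [mul_div_cancel₀ _ (hp j (Finset.mem_range.1 hj)).ne']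

namespace Corrosion.Mesh

variable (m : Mesh)

lemma xc_of_mem {i : ℕ} (h1 : 1 ≤ i) (h2 : i ≤ m.I) :
    m.xc i = (m.xe (i - 1) + m.xe i) / 2 := by
  rw [xc, if_neg (by omega), if_neg (by omega)]

lemma hp_pos {j : ℕ} (hj : j ≤ m.I) : 0 < m.hp j := by
  have hI := m.hI
  rw [hp]
  rcases Nat.eq_zero_or_pos j with rfl | hj0
  · have hxc : m.xc 1 = (m.xe 0 + m.xe 1) / 2 := m.xc_of_mem le_rfl hI
    rw [hxc, xc, if_pos rfl, m.xe0]
    linarith [m.mono 0 hI, m.xe0]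
  have hxc : m.xc j = (m.xe (j - 1) + m.xe j) / 2 := m.xc_of_mem hj0 hj
  have hprev := m.mono (j - 1) (by omega)
  rw [Nat.sub_add_cancel hj0] at hprev
  rcases hj.eq_or_lt with rfl | hjI
  · rw [hxc, xc, if_neg (by omega), if_pos rfl]
    linarith [m.xeI]
  · have hxc' : m.xc (j + 1) = (m.xe j + m.xe (j + 1)) / 2 := by
      simpa using m.xc_of_mem (i := j + 1) (by omega) hjI
    rw [hxc, hxc']
    linarith [m.mono j hjI]

lemma sum_hp : ∑ j ∈ Finset.range (m.I + 1), m.hp j = 1 := by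
  unfold hp
  rw [Finset.sum_range_sub, xc, if_neg (Nat.succ_ne_zero _), if_pos rfl, xc, if_pos rfl, sub_zero]

lemma sq_sub_zero_le_sum_sq_sub_div_hp (w : ℕ → ℝ) {i : ℕ} (hi : i ≤ m.I + 1) :
    (w i - w 0) ^ 2 ≤ ∑ j ∈ Finset.range (m.I + 1), (w (j + 1) - w j) ^ 2 / m.hp j := by
  have hrange : Finset.range i ⊆ Finset.range (m.I + 1) := Finset.range_subset_range.2 hi
  have hp_nonneg : ∀ j ∈ Finset.range (m.I + 1), 0 ≤ m.hp j :=
    fun j hj => (m.hp_pos (Nat.lt_succ_iff.1 (Finset.mem_range.1 hj))).le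
  have hterm_nonneg : ∀ j ∈ Finset.range (m.I + 1), 0 ≤ (w (j + 1) - w j) ^ 2 / m.hp j :=
    fun j hj => div_nonneg (sq_nonneg _) (hp_nonneg j hj)
  calc (w i - w 0) ^ 2
      ≤ (∑ j ∈ Finset.range i, m.hp j) * ∑ j ∈ Finset.range i, (w (j + 1) - w j) ^ 2 / m.hp j :=
        sq_sub_le_sum_mul_sum_sq_sub_div fun j hj => m.hp_pos (by omega)
    _ ≤ 1 * ∑ j ∈ Finset.range (m.I + 1), (w (j + 1) - w j) ^ 2 / m.hp j :=
        mul_le_mul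
          (m.sum_hp ▸ Finset.sum_le_sum_of_subset_of_nonneg hrange fun j hj _ => hp_nonneg j hj)
          (Finset.sum_le_sum_of_subset_of_nonneg hrange fun j hj _ => hterm_nonneg j hj)
          (Finset.sum_nonneg fun j hj => hterm_nonneg j (hrange hj)) zero_le_one
    _ = _ := one_mul _

end Corrosion.Mesh

open Corrosion in
theorem discrete_pointwise_bound_general (m : Mesh) (w : ℕ → ℝ)
    (i : ℕ) (h2 : i ≤ m.I) :
    w i ^ 2 ≤ 2 * m.norm1sq w := by
  have hdiff := m.sq_sub_zero_le_sum_sq_sub_div_hp w (Nat.le_succ_of_le h2)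
  rw [Mesh.norm1sq]
  nlinarith [sq_nonneg (2 * w 0 - w i), sq_nonneg (w (m.I + 1))]

open Corrosion in
/-- `w_i² ≤ 2 ‖w_h‖_{1,T}²` for `1 ≤ i ≤ I`. -/
theorem discrete_pointwise_bound (m : Mesh) (w : ℕ → ℝ)
    (i : ℕ) (h1 : 1 ≤ i) (h2 : i ≤ m.I) :
    w i ^ 2 ≤ 2 * m.norm1sq w :=
  discrete_pointwise_bound_general m w i h2
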